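/- arXiv:2005.02083 — 3 statements merged into one kernel-verified Lean document; each statement's English description precedes it below -/
import Mathlib

section
/- For positive integers m and n with m <= n, the product of q-integers satisfies [m]_q [n]_q = sum over j from 1 to m of q^{j-1} [m + n - 2j + 1]_q, as an identity of polynomials in q. -/
/-- The `q`-integer `[k]_q = 1 + q + ⋯ + q^(k-1)` as a polynomial. -/
noncomputable def qInt (k : ℕ) : Polynomial ℤ := ∑ i ∈ Finset.range k, Polynomial.X ^ i

/-!
Multiplying by `q - 1` turns `[k]_q` into `q^k - 1`, so the `j`-th summand on the right becomes
`q^(m+n-1-j) - q^j`. Summed over `j < m` this is `q^n [m]_q - [m]_q = [m]_q (q^n - 1)`, which is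
also `[m]_q [n]_q (q - 1)`; since `q - 1 ≠ 0` in the domain `ℤ[q]`, it can be cancelled.
-/

open Polynomial Finset

lemma qInt_mul_X_sub_one (k : ℕ) : qInt k * (X - 1) = X ^ k - 1 :=
  geom_sum_mul X k

lemma X_pow_mul_qInt_mul_X_sub_one (j k : ℕ) :
    X ^ j * qInt k * (X - 1) = X ^ (j + k) - X ^ j := by
  rw [mul_assoc, qInt_mul_X_sub_one, pow_add]
  ring

lemma sum_range_X_pow_reflect (m n : ℕ) :
    ∑ j ∈ range m, (X : ℤ[X]) ^ (n + (m - 1 - j)) = X ^ n * qInt m := by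
  rw [sum_range_reflect (fun j => (X : ℤ[X]) ^ (n + j)) m, qInt, mul_sum]
  simp only [pow_add]

/-- Here `j ∈ range m` stands for the index `j + 1` of the informal sum. -/
theorem qInt_mul_expansion_general (m n : ℕ) (hmn : m ≤ n) :
    qInt m * qInt n =
      ∑ j ∈ Finset.range m, Polynomial.X ^ j * qInt (m + n - 2 * j - 1) := by
  refine mul_right_cancel₀ (X_sub_C_ne_zero (1 : ℤ)) ?_
  rw [C_1]
  have summand (j : ℕ) (hj : j ∈ range m) :
      X ^ j * qInt (m + n - 2 * j - 1) * (X - 1) = X ^ (n + (m - 1 - j)) - X ^ j := by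
    have hjm := mem_range.mp hj
    rw [X_pow_mul_qInt_mul_X_sub_one, show j + (m + n - 2 * j - 1) = n + (m - 1 - j) by omega]
  calc qInt m * qInt n * (X - 1) = X ^ n * qInt m - qInt m := by
        rw [mul_assoc, qInt_mul_X_sub_one]
        ring
    _ = ∑ j ∈ range m, (X ^ (n + (m - 1 - j)) - X ^ j) := by
        rw [sum_sub_distrib, sum_range_X_pow_reflect, qInt]
    _ = (∑ j ∈ range m, X ^ j * qInt (m + n - 2 * j - 1)) * (X - 1) := by
        rw [sum_mul, sum_congr rfl summand]

/-- For `1 ≤ m ≤ n`, `[m]_q [n]_q = ∑_{j=1}^{m} q^(j-1) [m+n-2j+1]_q`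
(here indexed by `j ∈ range m`, representing `j+1`). -/
theorem qInt_mul_expansion (m n : ℕ) (hm : 1 ≤ m) (hmn : m ≤ n) :
    qInt m * qInt n =
      ∑ j ∈ Finset.range m, Polynomial.X ^ j * qInt (m + n - 2 * j - 1) :=
  qInt_mul_expansion_general m n hmn
end

section
/- For positive integers k_1, k_2, k_3 with k_1, k_3 >= 2, the polynomial [k_3]_q (1 + q [k_1]_q [k_2]_q) + q^{k_2+k_3} [k_1]_q has a unimodal coefficient sequence. -/
/-- The coefficient sequence of a polynomial weakly increases up to some index `m`
and weakly decreases afterwards. -/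
def CoeffUnimodal (p : Polynomial ℤ) : Prop :=
  ∃ m : ℕ, (∀ i j : ℕ, i ≤ j → j ≤ m → p.coeff i ≤ p.coeff j) ∧
    (∀ i j : ℕ, m ≤ i → i ≤ j → p.coeff j ≤ p.coeff i)

open Polynomial

lemma coeffUnimodal_of_le_succ {p : ℤ[X]} (m : ℕ)
    (hup : ∀ n < m, p.coeff n ≤ p.coeff (n + 1))
    (hdown : ∀ n ≥ m, p.coeff (n + 1) ≤ p.coeff n) : CoeffUnimodal p := by
  have hmono : MonotoneOn p.coeff (Set.Iic m) :=
    monotoneOn_of_le_succ Set.ordConnected_Iic fun n _ _ hn ↦ by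
      rw [Order.succ_eq_add_one] at hn ⊢
      exact hup n (Set.mem_Iic.mp hn)
  have hanti : AntitoneOn p.coeff {n | m ≤ n} := antitoneOn_nat_Ici_of_succ_le hdown
  exact ⟨m, fun i j hij hjm ↦ hmono (Set.mem_Iic.mpr (hij.trans hjm)) hjm hij,
    fun i j hmi hij ↦ hanti hmi (hmi.trans hij) hij⟩

lemma coeff_one_sub_X_mul_succ {R : Type*} [Ring R] (p : R[X]) (n : ℕ) :
    ((1 - X) * p).coeff (n + 1) = p.coeff (n + 1) - p.coeff n := by
  simp only [sub_mul, one_mul, coeff_sub, coeff_X_mul]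

lemma coeff_qInt (k n : ℕ) : (qInt k).coeff n = if n < k then 1 else 0 := by
  simp [qInt, coeff_X_pow]

lemma qInt_succ (k : ℕ) : qInt (k + 1) = qInt k + X ^ k :=
  Finset.sum_range_succ _ _

lemma one_sub_X_mul_qInt (k : ℕ) : (1 - X) * qInt k = 1 - X ^ k :=
  mul_neg_geom_sum X k

lemma coeff_qInt_mul_qInt (a b n : ℕ) :
    (qInt a * qInt b).coeff n =
      max 0 (min (min ((n : ℤ) + 1) a) (min (b : ℤ) (a + b - 1 - n))) := by
  induction a with
  | zero => simp only [qInt, Finset.range_zero, Finset.sum_empty, zero_mul, coeff_zero]; omega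
  | succ a ih =>
    rw [qInt_succ, add_mul, coeff_add, ih, mul_comm, coeff_mul_X_pow', coeff_qInt]
    split_ifs <;> omega

lemma one_sub_X_mul_threeSegment (a b c : ℕ) :
    (1 - X) * (qInt c * (1 + X * qInt a * qInt b) + X ^ (b + c) * qInt a) =
      1 - X ^ c + X ^ (b + c) - X ^ (a + b + c) + (X - X ^ (c + 1)) * (qInt a * qInt b) := by
  linear_combination (1 + X * qInt a * qInt b) * one_sub_X_mul_qInt c +
    X ^ (b + c) * one_sub_X_mul_qInt a

lemma coeff_succ_sub_coeff_threeSegment (a b c n : ℕ) :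
    let P := qInt c * (1 + X * qInt a * qInt b) + X ^ (b + c) * qInt a
    P.coeff (n + 1) - P.coeff n =
      (if n + 1 = b + c then 1 else 0) - (if n + 1 = c then 1 else 0)
        - (if n + 1 = a + b + c then 1 else 0) + (qInt a * qInt b).coeff n
        - if c ≤ n then (qInt a * qInt b).coeff (n - c) else 0 := by
  intro P
  rw [← coeff_one_sub_X_mul_succ, one_sub_X_mul_threeSegment, sub_mul,
    mul_comm (X ^ (c + 1))]
  simp only [coeff_add, coeff_sub, coeff_one, coeff_X_pow, coeff_X_mul, coeff_mul_X_pow',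
    Nat.add_le_add_iff_right, Nat.add_sub_add_right, Nat.succ_ne_zero, if_false]
  ring

theorem three_segment_unimodal_general (k₁ k₂ k₃ : ℕ) (h1 : 2 ≤ k₁) (h3 : 2 ≤ k₃) :
    CoeffUnimodal (qInt k₃ * (1 + Polynomial.X * qInt k₁ * qInt k₂) +
      Polynomial.X ^ (k₂ + k₃) * qInt k₁) := by
  -- the mode is `k₃ - 1` when `[k₃]_q` dominates, the middle of the degree range otherwise
  refine coeffUnimodal_of_le_succ
    (if k₁ + k₂ ≤ k₃ then k₃ - 1 else (k₁ + k₂ + k₃) / 2) ?_ ?_ <;>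
  · intro n hn
    have hdiff := coeff_succ_sub_coeff_threeSegment k₁ k₂ k₃ n
    simp only [coeff_qInt_mul_qInt] at hdiff
    split_ifs at hn hdiff <;> omega

/-- For `k₁, k₃ ≥ 2` and `k₂ ≥ 1`, the polynomial
`[k₃]_q (1 + q [k₁]_q [k₂]_q) + q^(k₂+k₃) [k₁]_q` has a unimodal
coefficient sequence. -/
theorem three_segment_unimodal (k₁ k₂ k₃ : ℕ) (h1 : 2 ≤ k₁) (h2 : 1 ≤ k₂) (h3 : 2 ≤ k₃) :
    CoeffUnimodal (qInt k₃ * (1 + Polynomial.X * qInt k₁ * qInt k₂) +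
      Polynomial.X ^ (k₂ + k₃) * qInt k₁) :=
  three_segment_unimodal_general k₁ k₂ k₃ h1 h3
end

section
/- For n >= 1, the rank sequence of the Fibonacci cube Gamma_n, given by r_j = C(n-j+1, j) for 0 <= j <= ceil(n/2), is unimodal. -/
/-! With `N = n + 1` and `r j = C(N - j, j)`, one has
`r (j + 1) * ((j + 1) * (N - j)) = r j * ((N - 2j) * (N - 2j - 1))`.
As `j` grows the factor `(j + 1) * (N - j)` increases and `(N - 2j) * (N - 2j - 1)` decreases,
so once the sequence steps down it keeps stepping down. -/
open Set

theorem exists_monotoneOn_antitoneOn_of_step {α : Type*} [Preorder α] (f : ℕ → α) (L : ℕ)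
    (P : ℕ → Prop) (hP : ∀ i j, i ≤ j → j < L → P j → P i)
    (hup : ∀ k < L, P k → f k ≤ f (k + 1)) (hdown : ∀ k < L, ¬P k → f (k + 1) ≤ f k) :
    ∃ m ≤ L, MonotoneOn f (Iic m) ∧ AntitoneOn f (Icc m L) := by
  classical
  have hex : ∃ k, L ≤ k ∨ ¬P k := ⟨L, .inl le_rfl⟩
  refine ⟨Nat.find hex, Nat.find_min' hex (.inl le_rfl), ?_, ?_⟩
  · refine monotoneOn_of_le_succ ordConnected_Iic fun k _ _ hk => ?_
    rw [Order.succ_eq_add_one] at hk ⊢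
    have hPk := Nat.find_min hex (show k < Nat.find hex from hk)
    push Not at hPk
    exact hup k hPk.1 hPk.2
  · refine antitoneOn_of_succ_le ordConnected_Icc fun k _ ⟨hmk, _⟩ hk1 => ?_
    rw [Order.succ_eq_add_one] at hk1 ⊢
    have hkL : k < L := hk1.2
    refine hdown k hkL fun hPk => ?_
    rcases Nat.find_spec hex with hL | hPm
    · omega
    · exact hPm (hP _ k hmk hkL hPk)

theorem Nat.choose_add_succ_mul (p j : ℕ) :
    (p + j + 1).choose (j + 1) * ((j + 1) * (p + j + 2)) =
      (p + j + 2).choose j * ((p + 2) * (p + 1)) := by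
  have h₁ : (p + j + 1).choose (j + 1) * (j + 1) = (p + j + 1).choose j * (p + 1) := by
    rw [Nat.choose_succ_right_eq]; congr 1; omega
  have h₂ : (p + j + 2) * (p + j + 1).choose j = (p + j + 2).choose (j + 1) * (j + 1) :=
    Nat.add_one_mul_choose_eq _ _
  have h₃ : (p + j + 2).choose (j + 1) * (j + 1) = (p + j + 2).choose j * (p + 2) := by
    rw [Nat.choose_succ_right_eq]; congr 1; omega
  calc (p + j + 1).choose (j + 1) * ((j + 1) * (p + j + 2))
      = (p + j + 2) * (p + j + 1).choose j * (p + 1) := by rw [← mul_assoc, h₁]; ring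
    _ = (p + j + 2).choose j * ((p + 2) * (p + 1)) := by rw [h₂, h₃]; ring

theorem Nat.choose_sub_succ_mul {N j : ℕ} (h : 2 * j + 2 ≤ N) :
    (N - (j + 1)).choose (j + 1) * ((j + 1) * (N - j)) =
      (N - j).choose j * ((N - 2 * j) * (N - 2 * j - 1)) := by
  obtain ⟨p, rfl⟩ := Nat.exists_eq_add_of_le' h
  convert Nat.choose_add_succ_mul p j using 3 <;> omega

theorem succ_mul_sub_le_succ_mul_sub {N i j : ℕ} (hij : i ≤ j) (hN : i + j < N) :
    (i + 1) * (N - i) ≤ (j + 1) * (N - j) := by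
  obtain ⟨d, rfl⟩ := Nat.exists_eq_add_of_le hij
  obtain ⟨p, rfl⟩ := Nat.exists_eq_add_of_le' hN
  have e₁ : p + (i + (i + d) + 1) - i = p + i + d + 1 := by omega
  have e₂ : p + (i + (i + d) + 1) - (i + d) = p + i + 1 := by omega
  rw [e₁, e₂]
  nlinarith

theorem Nat.choose_sub_le_choose_sub_succ {N j : ℕ} (h : 2 * j + 2 ≤ N)
    (hratio : (j + 1) * (N - j) ≤ (N - 2 * j) * (N - 2 * j - 1)) :
    (N - j).choose j ≤ (N - (j + 1)).choose (j + 1) := by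
  refine Nat.le_of_mul_le_mul_right ?_ (Nat.mul_pos j.succ_pos (by omega : 0 < N - j))
  calc (N - j).choose j * ((j + 1) * (N - j))
      ≤ (N - j).choose j * ((N - 2 * j) * (N - 2 * j - 1)) := Nat.mul_le_mul_left _ hratio
    _ = _ := (Nat.choose_sub_succ_mul h).symm

theorem Nat.choose_sub_succ_le_choose_sub {N j : ℕ} (h : 2 * j + 2 ≤ N)
    (hratio : (N - 2 * j) * (N - 2 * j - 1) ≤ (j + 1) * (N - j)) :
    (N - (j + 1)).choose (j + 1) ≤ (N - j).choose j := by
  refine Nat.le_of_mul_le_mul_right ?_ (Nat.mul_pos j.succ_pos (by omega : 0 < N - j))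
  calc (N - (j + 1)).choose (j + 1) * ((j + 1) * (N - j))
      = (N - j).choose j * ((N - 2 * j) * (N - 2 * j - 1)) := Nat.choose_sub_succ_mul h
    _ ≤ _ := Nat.mul_le_mul_left _ hratio

theorem fibonacci_cube_rank_unimodal_general (n : ℕ) :
    ∃ m : ℕ, m ≤ (n + 1) / 2 ∧
      (∀ i j : ℕ, i ≤ j → j ≤ m →
        Nat.choose (n + 1 - i) i ≤ Nat.choose (n + 1 - j) j) ∧
      (∀ i j : ℕ, m ≤ i → i ≤ j → j ≤ (n + 1) / 2 →
        Nat.choose (n + 1 - j) j ≤ Nat.choose (n + 1 - i) i) := by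
  set N := n + 1
  obtain ⟨m, hmL, hmono, hanti⟩ := exists_monotoneOn_antitoneOn_of_step
    (fun k => (N - k).choose k) (N / 2)
    (fun k => (k + 1) * (N - k) ≤ (N - 2 * k) * (N - 2 * k - 1))
    (fun i j hij hj hPj => calc
      (i + 1) * (N - i) ≤ (j + 1) * (N - j) := succ_mul_sub_le_succ_mul_sub hij (by omega)
      _ ≤ (N - 2 * j) * (N - 2 * j - 1) := hPj
      _ ≤ (N - 2 * i) * (N - 2 * i - 1) := Nat.mul_le_mul (by omega) (by omega))
    (fun k hk => Nat.choose_sub_le_choose_sub_succ (by omega))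
    (fun k hk hPk => Nat.choose_sub_succ_le_choose_sub (by omega) (Nat.le_of_not_le hPk))
  exact ⟨m, hmL, fun i j hij hjm => hmono (hij.trans hjm) hjm hij,
    fun i j hmi hij hjL => hanti ⟨hmi, hij.trans hjL⟩ ⟨hmi.trans hij, hjL⟩ hij⟩

/-- For `n ≥ 1`, the rank sequence `r j = C(n - j + 1, j)`, `0 ≤ j ≤ ⌈n/2⌉`,
of the Fibonacci cube `Γₙ` is unimodal. -/
theorem fibonacci_cube_rank_unimodal (n : ℕ) (hn : 1 ≤ n) :
    ∃ m : ℕ, m ≤ (n + 1) / 2 ∧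
      (∀ i j : ℕ, i ≤ j → j ≤ m →
        Nat.choose (n + 1 - i) i ≤ Nat.choose (n + 1 - j) j) ∧
      (∀ i j : ℕ, m ≤ i → i ≤ j → j ≤ (n + 1) / 2 →
        Nat.choose (n + 1 - j) j ≤ Nat.choose (n + 1 - i) i) :=
  fibonacci_cube_rank_unimodal_general n
end
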